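/- For positive integers l and n, (1/lcm(l,n)) · ∑_{k=1}^{lcm(l,n)} C_l(k) C_n(k) equals φ(n) if l = n and 0 otherwise, where C_m(k) is the Ramanujan sum and φ is Euler's totient function. -/

import Mathlib

/-!
Write `ζ = exp(2πi/L)` for a common multiple `L` of `l` and `n`, so that
`C_l(k) = ∑_j ζ^(j (L/l) k)`. Expanding `C_l(k) C_n(k)` and summing over `k` first, the
orthogonality of `L`-th roots of unity keeps exactly the pairs `(j, i)` of reduced residues with
`L ∣ j (L/l) + i (L/n)`, i.e. with `j/l + i/n ∈ ℤ`. Multiplying by `n` gives `l ∣ j n`, hence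
`l ∣ n`, and symmetrically `n ∣ l`; so no pair survives unless `l = n`, and then every `j`
pairs with the unique `i ≡ -j (mod n)`.
-/

/-- The Ramanujan sum `C_m(k) = ∑_{1 ≤ j ≤ m, gcd(j,m)=1} exp(2πi j k / m)`. -/
noncomputable def ramanujanC (m : ℕ) (k : ℕ) : ℂ :=
  ∑ j ∈ (Finset.Icc 1 m).filter (fun j => Nat.gcd j m = 1),
    Complex.exp (2 * Real.pi * Complex.I * j * k / m)

open Finset Complex

theorem Finset.sum_Icc_one_eq_sum_range {M : Type*} [AddCommMonoid M] (f : ℕ → M) (n : ℕ) :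
    ∑ k ∈ Icc 1 n, f k = ∑ k ∈ range n, f (k + 1) := by
  rw [← Ico_add_one_right_eq_Icc, sum_Ico_eq_sum_range, Nat.add_sub_cancel]
  simp only [add_comm]

theorem IsPrimitiveRoot.sum_Icc_pow_mul {R : Type*} [CommRing R] [IsDomain R] {ζ : R} {L : ℕ}
    (hζ : IsPrimitiveRoot ζ L) (m : ℕ) :
    ∑ k ∈ Icc 1 L, ζ ^ (m * k) = if L ∣ m then (L : R) else 0 := by
  simp only [pow_mul]
  split_ifs with hm
  · simp [(hζ.pow_eq_one_iff_dvd m).mpr hm]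
  · have hw : ζ ^ m - 1 ≠ 0 := sub_ne_zero.mpr fun h => hm ((hζ.pow_eq_one_iff_dvd m).mp h)
    have hgeom := geom_sum_mul (ζ ^ m) L
    rw [← pow_mul, mul_comm m, pow_mul, hζ.pow_eq_one, one_pow, sub_self] at hgeom
    rw [sum_Icc_one_eq_sum_range]
    simp only [pow_succ, ← sum_mul]
    simp [(mul_eq_zero.mp hgeom).resolve_right hw]

theorem ramanujanC_eq_sum_pow {l L : ℕ} (hL : 0 < L) (hl : l ∣ L) (k : ℕ) :
    ramanujanC l k = ∑ j ∈ (Icc 1 l).filter (fun j => j.gcd l = 1),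
      exp (2 * Real.pi * I / L) ^ (j * (L / l) * k) := by
  obtain ⟨a, rfl⟩ := hl
  have hl : (l : ℂ) ≠ 0 := by exact_mod_cast (Nat.pos_of_mul_pos_right hL).ne'
  have ha : (a : ℂ) ≠ 0 := by exact_mod_cast (Nat.pos_of_mul_pos_left hL).ne'
  refine sum_congr rfl fun j _ => ?_
  rw [Nat.mul_div_cancel_left a (Nat.pos_of_mul_pos_right hL), ← exp_nat_mul]
  congr 1
  push_cast
  field_simp

theorem card_filter_Icc_coprime_eq_totient (n : ℕ) :
    #((Icc 1 n).filter (fun j => j.gcd n = 1)) = n.totient := by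
  rw [← Nat.filter_coprime_Ico_eq_totient n 1, add_comm, Ico_add_one_right_eq_Icc]
  simp only [Nat.coprime_comm (m := n)]

theorem dvd_of_mul_dvd_mul_add_mul {l n a b j i : ℕ} (ha : 0 < a) (hab : l * a = n * b)
    (hj : j.Coprime l) (h : l * a ∣ j * a + i * b) : l ∣ n := by
  have hexp : n * (j * a + i * b) = (j * n) * a + i * (l * a) := by rw [hab]; ring
  have hjn : l * a ∣ (j * n) * a :=
    (Nat.dvd_add_left (dvd_mul_left _ i)).mp (hexp ▸ dvd_mul_of_dvd_right h n)
  exact hj.symm.dvd_of_dvd_mul_left (Nat.dvd_of_mul_dvd_mul_right ha hjn)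

theorem Nat.Coprime.of_dvd_add {n j i : ℕ} (hj : j.Coprime n) (h : n ∣ j + i) : i.Coprime n := by
  refine Nat.eq_one_of_dvd_one (hj ▸ Nat.dvd_gcd ?_ (Nat.gcd_dvd_right i n))
  exact (Nat.dvd_add_left (Nat.gcd_dvd_left i n)).mp ((Nat.gcd_dvd_right i n).trans h)

theorem filter_Icc_dvd_add_eq_singleton {n : ℕ} (hn : 0 < n) (j : ℕ) :
    (Icc 1 n).filter (fun i => n ∣ j + i) = {n - j % n} := by
  have hr := Nat.mod_lt j hn
  have hdvd : ∀ i, n ∣ j + i ↔ n ∣ j % n + i := fun i => by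
    simp [Nat.dvd_iff_mod_eq_zero, Nat.add_mod]
  ext i
  simp only [mem_filter, mem_Icc, mem_singleton, hdvd]
  constructor
  · rintro ⟨⟨hi1, hin⟩, c, hc⟩
    have hc2 : c < 2 := Nat.lt_of_mul_lt_mul_left (a := n) (by omega)
    have hc0 : c ≠ 0 := by rintro rfl; omega
    obtain rfl : c = 1 := by omega
    omega
  · intro hi
    exact ⟨by omega, 1, by omega⟩

theorem sum_filter_coprime_ite_dvd_add {M : Type*} [AddCommMonoid M] {n j : ℕ} (hn : 0 < n)
    (hj : j.Coprime n) (c : M) :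
    ∑ i ∈ (Icc 1 n).filter (fun i => i.gcd n = 1), (if n ∣ j + i then c else 0) = c := by
  rw [← sum_filter, filter_filter,
    filter_congr fun i _ => and_iff_right_of_imp hj.of_dvd_add,
    filter_Icc_dvd_add_eq_singleton hn, sum_singleton]

theorem sum_ramanujanC_mul_ramanujanC {l n L : ℕ} (hL : 0 < L) (hl : l ∣ L) (hn : n ∣ L) :
    ∑ k ∈ Icc 1 L, ramanujanC l k * ramanujanC n k =
      if l = n then (L * n.totient : ℂ) else 0 := by
  have hζ := isPrimitiveRoot_exp L hL.ne'
  have hexpand : ∑ k ∈ Icc 1 L, ramanujanC l k * ramanujanC n k =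
      ∑ j ∈ (Icc 1 l).filter (fun j => j.gcd l = 1), ∑ i ∈ (Icc 1 n).filter (fun i => i.gcd n = 1),
        if L ∣ j * (L / l) + i * (L / n) then (L : ℂ) else 0 := by
    simp only [ramanujanC_eq_sum_pow hL hl, ramanujanC_eq_sum_pow hL hn, sum_mul_sum, ← pow_add,
      ← add_mul, ← hζ.sum_Icc_pow_mul]
    rw [sum_comm]
    exact sum_congr rfl fun j _ => sum_comm
  have hla : l * (L / l) = L := Nat.mul_div_cancel' hl
  have hnb : n * (L / n) = L := Nat.mul_div_cancel' hn
  have ha : 0 < L / l := Nat.pos_of_mul_pos_left (hla ▸ hL)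
  have hb : 0 < L / n := Nat.pos_of_mul_pos_left (hnb ▸ hL)
  rw [hexpand]
  split_ifs with hln
  · subst hln
    have hl0 : 0 < l := Nat.pos_of_mul_pos_right (hla ▸ hL)
    have hdvd : ∀ j i, L ∣ j * (L / l) + i * (L / l) ↔ l ∣ j + i := fun j i => by
      rw [← add_mul, ← Nat.mul_dvd_mul_iff_right (a := l) ha, hla]
    simp only [hdvd]
    rw [sum_congr rfl fun j hj => sum_filter_coprime_ite_dvd_add hl0 (mem_filter.mp hj).2 _,
      sum_const, card_filter_Icc_coprime_eq_totient, nsmul_eq_mul, mul_comm]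
  · refine sum_eq_zero fun j hj => sum_eq_zero fun i hi => if_neg fun h => hln ?_
    have hj : j.Coprime l := (mem_filter.mp hj).2
    have hi : i.Coprime n := (mem_filter.mp hi).2
    exact Nat.dvd_antisymm (dvd_of_mul_dvd_mul_add_mul ha (hla.trans hnb.symm) hj (by rwa [hla]))
      (dvd_of_mul_dvd_mul_add_mul hb (hnb.trans hla.symm) hi (by rwa [hnb, add_comm]))

/-- Orthogonality of Ramanujan sums: for positive integers `l, n`,
`(1/lcm(l,n)) ∑_{k=1}^{lcm(l,n)} C_l(k) C_n(k)` equals `φ(n)` if `l = n`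
and `0` otherwise. -/
theorem ramanujan_orthogonality (l n : ℕ) (hl : 0 < l) (hn : 0 < n) :
    (1 / (Nat.lcm l n : ℂ)) *
        ∑ k ∈ Finset.Icc 1 (Nat.lcm l n), ramanujanC l k * ramanujanC n k =
      if l = n then (Nat.totient n : ℂ) else 0 := by
  have hL := Nat.lcm_pos hl hn
  rw [sum_ramanujanC_mul_ramanujanC hL (Nat.dvd_lcm_left l n) (Nat.dvd_lcm_right l n)]
  split_ifs
  · rw [one_div, inv_mul_cancel_left₀ (by exact_mod_cast hL.ne')]
  · rw [mul_zero]
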